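/- arXiv:1812.08619 — 3 statements merged into one kernel-verified Lean document; each statement's English description precedes it below -/
import Mathlib

section
/- Let p : ℝ^d → ℝ be a probability density function of class C⁴ all of whose partial derivatives of order ≤ 4 are bounded. Fix a_1, a_2 > 0 with a_1 ≠ a_2, and for h > 0 set h_1 = a_1 h, h_2 = a_2 h, and let c_1 = h_2²/(h_2² − h_1²), c_2 = −h_1²/(h_2² − h_1²) (so c_1 + c_2 = 1 and c_1 h_1² + c_2 h_2² = 0; note c_1, c_2 do not depend on h). Then for every x ∈ ℝ^d there is a constant C such that for all h > 0, |c_1 (φ_{h_1} * p)(x) + c_2 (φ_{h_2} * p)(x) − p(x)| ≤ C h⁴; i.e. the bias of the two-bandwidth Richardson-extrapolated kernel density estimator is O(h⁴). -/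
/-!
After the substitution `y = x + s • w`, the smoothing `(φ_s * p)(x)` is the average of
`p (x + s • w)` against the standard normal density `gaussKernel d 1 0`. That density is even, so
`p (x + s • w)` may be replaced by its even part `(p (x + s • w) + p (x - s • w)) / 2`, whose
fourth-order Taylor expansion along the line has no odd terms. Hence
`(φ_s * p)(x) = p x + I s² + O(s⁴)`, the error being controlled by the bounded fourth derivatives
and the fourth Gaussian moment. The weights satisfy `c₁ + c₂ = 1` and `c₁ a₁² + c₂ a₂² = 0`, so
the combination keeps `p x` and cancels the `s²` term.
-/

open MeasureTheory ProbabilityTheory Real Filter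

/-- The Gaussian kernel on `ℝ^d` with bandwidth `h`. -/
noncomputable def gaussKernel (d : ℕ) (h : ℝ) (x y : EuclideanSpace ℝ (Fin d)) : ℝ :=
  Real.exp (-‖x - y‖ ^ 2 / (2 * h ^ 2)) / (Real.sqrt (2 * Real.pi) ^ d * h ^ d)

/-- The Gaussian smoothing `(φ_h * p)(x) = ∫ K_h(x,y) p(y) dy`. -/
noncomputable def gaussSmooth (d : ℕ) (h : ℝ) (p : EuclideanSpace ℝ (Fin d) → ℝ)
    (x : EuclideanSpace ℝ (Fin d)) : ℝ :=
  ∫ y, gaussKernel d h x y * p y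

/-- Iterated partial derivative along a list of coordinate directions. -/
noncomputable def lderiv {d : ℕ} : List (Fin d) → (EuclideanSpace ℝ (Fin d) → ℝ) →
    EuclideanSpace ℝ (Fin d) → ℝ
  | [], f => f
  | i :: l, f => fun x => fderiv ℝ (lderiv l f) x (EuclideanSpace.single i 1)

section DirDeriv

variable {E : Type*} [NormedAddCommGroup E] [NormedSpace ℝ E]

noncomputable def dirDeriv (u : E) (f : E → ℝ) : E → ℝ :=
  fun y => fderiv ℝ f y u

lemma contDiff_dirDeriv {n : WithTop ℕ∞} {f : E → ℝ} (hf : ContDiff ℝ (n + 1) f) (u : E) :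
    ContDiff ℝ n (dirDeriv u f) :=
  (hf.fderiv_right le_rfl).clm_apply contDiff_const

lemma contDiff_iterate_dirDeriv {n : WithTop ℕ∞} {f : E → ℝ} (u : E) :
    ∀ {k : ℕ}, ContDiff ℝ (n + k) f → ContDiff ℝ n ((dirDeriv u)^[k] f)
  | 0, hf => by simpa using hf
  | k + 1, hf => by
    rw [Function.iterate_succ_apply']
    refine contDiff_dirDeriv (contDiff_iterate_dirDeriv u ?_) u
    rwa [add_assoc, add_comm 1, ← Nat.cast_add_one]

lemma differentiable_iterate_dirDeriv {n k : ℕ} {f : E → ℝ} (hf : ContDiff ℝ n f) (hk : k < n)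
    (u : E) : Differentiable ℝ ((dirDeriv u)^[k] f) := by
  have hf' : ContDiff ℝ (1 + k) f := hf.of_le (by norm_cast; omega)
  exact (contDiff_iterate_dirDeriv u hf').differentiable one_ne_zero

lemma iterate_dirDeriv_smul (s : ℝ) (u : E) (f : E → ℝ) (k : ℕ) :
    (dirDeriv (s • u))^[k] f = s ^ k • (dirDeriv u)^[k] f := by
  induction k with
  | zero => simp
  | succ k ih =>
    ext y
    simp only [Function.iterate_succ_apply', ih, dirDeriv, fderiv_const_smul_field, map_smul,
      Pi.smul_apply, smul_eq_mul, FunLike.coe_smul]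
    ring

lemma hasDerivAt_comp_add_smul {f : E → ℝ} (hf : Differentiable ℝ f) (x u : E) (t : ℝ) :
    HasDerivAt (fun t : ℝ => f (x + t • u)) (dirDeriv u f (x + t • u)) t := by
  have hline : HasDerivAt (fun t : ℝ => x + t • u) u t := by
    simpa using ((hasDerivAt_id t).smul_const u).const_add x
  exact (hf (x + t • u)).hasFDerivAt.comp_hasDerivAt t hline

end DirDeriv

section Taylor

open Finset Nat

lemma hasDerivAt_sum_range_mul_pow_div_factorial (c : ℕ → ℝ) (n : ℕ) (t : ℝ) :
    HasDerivAt (fun s => ∑ k ∈ range (n + 1), c k * s ^ k / k !)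
      (∑ k ∈ range n, c (k + 1) * t ^ k / k !) t := by
  simp_rw [sum_range_succ' _ n, pow_zero, mul_one, factorial_zero, cast_one, div_one]
  refine HasDerivAt.add_const _ (HasDerivAt.fun_sum (u := range n) fun k _ =>
    (((hasDerivAt_pow (k + 1) t).const_mul (c (k + 1))).div_const _).congr_deriv ?_)
  rw [Nat.factorial_succ]
  push_cast
  field_simp

lemma abs_sub_sum_taylor_le {M : ℝ} :
    ∀ {n : ℕ} {g : ℕ → ℝ → ℝ}, (∀ k < n, ∀ t, HasDerivAt (g k) (g (k + 1) t) t) →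
      (∀ t, |g n t| ≤ M) → ∀ s, |g 0 s - ∑ k ∈ range n, g k 0 * s ^ k / k !| ≤ M * |s| ^ n
  | 0, g, _, hM, s => by simpa using hM s
  | n + 1, g, hg, hM, s => by
    have hM0 : 0 ≤ M := (abs_nonneg _).trans (hM 0)
    have hderiv := abs_sub_sum_taylor_le (g := fun k => g (k + 1))
      (fun k hk => hg (k + 1) (by omega)) hM
    -- the remainder of `g 0` has the remainder of `g 1` as derivative
    have hF : ∀ t, HasDerivAt (fun s => g 0 s - ∑ k ∈ range (n + 1), g k 0 * s ^ k / k !)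
        (g 1 t - ∑ k ∈ range n, g (k + 1) 0 * t ^ k / k !) t := fun t =>
      (hg 0 (by omega) t).sub (hasDerivAt_sum_range_mul_pow_div_factorial _ n t)
    have hmvt := (convex_closedBall (0 : ℝ) |s|).norm_image_sub_le_of_norm_hasDerivWithin_le
      (fun t _ => (hF t).hasDerivWithinAt) (C := M * |s| ^ n) (fun t ht => ?_)
      (Metric.mem_closedBall_self (abs_nonneg s)) (y := s) (by simp)
    · simpa [sum_range_succ', pow_succ, mul_assoc] using hmvt
    · rw [mem_closedBall_zero_iff, Real.norm_eq_abs] at ht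
      exact (hderiv t).trans (by gcongr)

lemma abs_even_part_sub_taylor_le {g : ℕ → ℝ → ℝ} {M : ℝ}
    (hg : ∀ k < 4, ∀ t, HasDerivAt (g k) (g (k + 1) t) t) (hM : ∀ t, |g 4 t| ≤ M) :
    |(g 0 1 + g 0 (-1)) / 2 - g 0 0 - g 2 0 / 2| ≤ M := by
  have hpos := abs_sub_sum_taylor_le hg hM 1
  have hneg := abs_sub_sum_taylor_le hg hM (-1)
  simp only [sum_range_succ, sum_range_zero, Nat.factorial] at hpos hneg
  norm_num at hpos hneg
  rw [abs_le] at hpos hneg ⊢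
  constructor <;> linarith [hpos.1, hpos.2, hneg.1, hneg.2]

end Taylor

lemma abs_even_part_sub_taylor_le_of_dirDeriv {E : Type*} [NormedAddCommGroup E] [NormedSpace ℝ E]
    {f : E → ℝ} (hf : ContDiff ℝ 4 f) (x u : E) {M : ℝ}
    (hM : ∀ y, |(dirDeriv u)^[4] f y| ≤ M) :
    |(f (x + u) + f (x - u)) / 2 - f x - (dirDeriv u)^[2] f x / 2| ≤ M := by
  have hg : ∀ k < 4, ∀ t : ℝ, HasDerivAt (fun t => (dirDeriv u)^[k] f (x + t • u))
      ((dirDeriv u)^[k + 1] f (x + t • u)) t := fun k hk t => by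
    rw [Function.iterate_succ_apply']
    exact hasDerivAt_comp_add_smul (differentiable_iterate_dirDeriv hf hk u) x u t
  simpa [← sub_eq_add_neg] using
    abs_even_part_sub_taylor_le (g := fun k t => (dirDeriv u)^[k] f (x + t • u)) hg
      (fun t => hM _)

section Coordinates

variable {d : ℕ}

lemma contDiff_lderiv {n : WithTop ℕ∞} {f : EuclideanSpace ℝ (Fin d) → ℝ} :
    ∀ (l : List (Fin d)), ContDiff ℝ (n + l.length) f → ContDiff ℝ n (lderiv l f)
  | [], hf => by simpa [lderiv] using hf
  | i :: l, hf => contDiff_dirDeriv (contDiff_lderiv l (by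
      rwa [List.length_cons, Nat.cast_add_one, ← add_assoc, add_right_comm] at hf)) _

lemma dirDeriv_lderiv_eq_sum (u : EuclideanSpace ℝ (Fin d)) (l : List (Fin d))
    (f : EuclideanSpace ℝ (Fin d) → ℝ) (y : EuclideanSpace ℝ (Fin d)) :
    dirDeriv u (lderiv l f) y = ∑ i, u i * lderiv (i :: l) f y := by
  conv_lhs => rw [← (EuclideanSpace.basisFun (Fin d) ℝ).sum_repr u]
  simp [dirDeriv, lderiv, map_sum]

lemma iterate_dirDeriv_eq_sum (u : EuclideanSpace ℝ (Fin d)) :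
    ∀ {k : ℕ} {f : EuclideanSpace ℝ (Fin d) → ℝ}, ContDiff ℝ k f → ∀ y,
      (dirDeriv u)^[k] f y = ∑ c : Fin k → Fin d, (∏ j, u (c j)) * lderiv (List.ofFn c) f y
  | 0, f, _, y => by simp [lderiv]
  | k + 1, f, hf, y => by
    have hdiff (c : Fin k → Fin d) : Differentiable ℝ (lderiv (List.ofFn c) f) :=
      (contDiff_lderiv (n := 1) _ (hf.of_le (by simp [add_comm]))).differentiable one_ne_zero
    have hk : (dirDeriv u)^[k] f =
        fun y => ∑ c : Fin k → Fin d, (∏ j, u (c j)) * lderiv (List.ofFn c) f y :=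
      funext (iterate_dirDeriv_eq_sum u (hf.of_le (by norm_cast; omega)))
    rw [Function.iterate_succ_apply', hk, dirDeriv,
      fderiv_fun_sum fun c _ => ((hdiff c) y).const_mul _]
    simp only [fderiv_const_mul ((hdiff _) y), FunLike.coe_sum, Finset.sum_apply,
      FunLike.coe_smul, Pi.smul_apply, smul_eq_mul]
    have hcoord (c : Fin k → Fin d) : fderiv ℝ (lderiv (List.ofFn c) f) y u =
        ∑ i, u i * lderiv (i :: List.ofFn c) f y := dirDeriv_lderiv_eq_sum u _ f y
    simp only [hcoord, Finset.mul_sum]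
    rw [← (Fin.consEquiv fun _ => Fin d).sum_comp, Fintype.sum_prod_type, Finset.sum_comm]
    refine Finset.sum_congr rfl fun c _ => Finset.sum_congr rfl fun i _ => ?_
    simp only [Fin.consEquiv, Equiv.coe_fn_mk, Fin.prod_univ_succ, Fin.cons_zero, Fin.cons_succ,
      List.ofFn_succ]
    ring

lemma abs_iterate_dirDeriv_le {k : ℕ} {f : EuclideanSpace ℝ (Fin d) → ℝ} (hf : ContDiff ℝ k f)
    {B : ℝ} {y : EuclideanSpace ℝ (Fin d)}
    (hB : ∀ c : Fin k → Fin d, |lderiv (List.ofFn c) f y| ≤ B)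
    (u : EuclideanSpace ℝ (Fin d)) :
    |(dirDeriv u)^[k] f y| ≤ d ^ k * B * ‖u‖ ^ k := by
  have hterm (c : Fin k → Fin d) : |(∏ j, u (c j)) * lderiv (List.ofFn c) f y| ≤ ‖u‖ ^ k * B := by
    rw [abs_mul, Finset.abs_prod]
    refine mul_le_mul ?_ (hB c) (abs_nonneg _) (by positivity)
    simpa using Finset.prod_le_prod (s := Finset.univ) (fun j _ => abs_nonneg _)
      (fun j _ => (PiLp.norm_apply_le u (c j) : ‖u (c j)‖ ≤ ‖u‖))
  rw [iterate_dirDeriv_eq_sum u hf]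
  calc _ ≤ ∑ c : Fin k → Fin d, |(∏ j, u (c j)) * lderiv (List.ofFn c) f y| :=
        Finset.abs_sum_le_sum_abs _ _
    _ ≤ ∑ _c : Fin k → Fin d, ‖u‖ ^ k * B := Finset.sum_le_sum fun c _ => hterm c
    _ = d ^ k * B * ‖u‖ ^ k := by
        simp only [Finset.sum_const, Finset.card_univ, Fintype.card_pi, Fintype.card_fin,
          Finset.prod_const, nsmul_eq_mul, Nat.cast_pow]
        ring

lemma continuous_iterate_dirDeriv_apply {k : ℕ} {f : EuclideanSpace ℝ (Fin d) → ℝ}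
    (hf : ContDiff ℝ k f) (y : EuclideanSpace ℝ (Fin d)) :
    Continuous fun u => (dirDeriv u)^[k] f y := by
  simp_rw [iterate_dirDeriv_eq_sum _ hf]
  fun_prop

lemma exists_abs_lderiv_ofFn_le {n k : ℕ} {f : EuclideanSpace ℝ (Fin d) → ℝ}
    (hbdd : ∀ l : List (Fin d), l.length ≤ n → ∃ B, ∀ y, |lderiv l f y| ≤ B) (hk : k ≤ n) :
    ∃ B, ∀ (c : Fin k → Fin d) y, |lderiv (List.ofFn c) f y| ≤ B := by
  choose B hB using fun c : Fin k → Fin d => hbdd (List.ofFn c) (by simpa using hk)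
  obtain ⟨M, hM⟩ := Finite.exists_le B
  exact ⟨M, fun c y => (hB c y).trans (hM c)⟩

end Coordinates

section Gaussian

variable {d : ℕ}

lemma gaussKernel_one_zero (w : EuclideanSpace ℝ (Fin d)) :
    gaussKernel d 1 0 w = Real.exp (-(1 / 2) * ‖w‖ ^ 2) / Real.sqrt (2 * π) ^ d := by
  simp only [gaussKernel, zero_sub, norm_neg, one_pow, mul_one]
  ring_nf

lemma gaussKernel_one_zero_neg (w : EuclideanSpace ℝ (Fin d)) :
    gaussKernel d 1 0 (-w) = gaussKernel d 1 0 w := by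
  simp [gaussKernel_one_zero]

lemma continuous_gaussKernel_one_zero : Continuous (gaussKernel d 1 0) := by
  simp_rw [funext gaussKernel_one_zero]
  fun_prop

lemma gaussKernel_one_zero_nonneg (w : EuclideanSpace ℝ (Fin d)) : 0 ≤ gaussKernel d 1 0 w := by
  rw [gaussKernel_one_zero]
  positivity

lemma integral_gaussKernel_one_zero : ∫ w : EuclideanSpace ℝ (Fin d), gaussKernel d 1 0 w = 1 := by
  simp_rw [gaussKernel_one_zero, integral_div,
    GaussianFourier.integral_rexp_neg_mul_sq_norm (by norm_num : (0 : ℝ) < 1 / 2),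
    finrank_euclideanSpace_fin]
  rw [div_eq_one_iff_eq (by positivity), show π / (1 / 2) = 2 * π by ring,
    Real.sqrt_eq_rpow, ← Real.rpow_natCast, ← Real.rpow_mul (by positivity)]
  ring_nf

lemma integrable_gaussKernel_one_zero_mul_norm_pow (n : ℕ) :
    Integrable fun w : EuclideanSpace ℝ (Fin d) => gaussKernel d 1 0 w * ‖w‖ ^ n := by
  rcases subsingleton_or_nontrivial (EuclideanSpace ℝ (Fin d)) with _ | _
  · exact (continuous_gaussKernel_one_zero.mul (by fun_prop)).integrable_of_hasCompactSupport
      (HasCompactSupport.of_compactSpace _)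
  · have hradial := (integrableOn_rpow_mul_exp_neg_mul_sq (b := 1 / 2) (by norm_num)
      (s := ((d - 1 + n : ℕ) : ℝ)) (neg_one_lt_zero.trans_le (Nat.cast_nonneg _))).div_const
      (Real.sqrt (2 * π) ^ d)
    have := (integrable_fun_norm_addHaar (volume : Measure (EuclideanSpace ℝ (Fin d)))
      (f := fun r => Real.exp (-(1 / 2) * r ^ 2) / Real.sqrt (2 * π) ^ d * r ^ n)).2
      (IntegrableOn.congr_fun hradial (fun y _ => ?_) measurableSet_Ioi)
    · simpa only [gaussKernel_one_zero] using this
    · simp only [Real.rpow_natCast, finrank_euclideanSpace_fin, smul_eq_mul, pow_add]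
      ring

lemma gaussKernel_add_smul {s : ℝ} (hs : 0 < s) (x w : EuclideanSpace ℝ (Fin d)) :
    gaussKernel d s x (x + s • w) = gaussKernel d 1 0 w / s ^ d := by
  rw [gaussKernel, gaussKernel_one_zero, sub_add_cancel_left, norm_neg, norm_smul,
    Real.norm_eq_abs, abs_of_pos hs]
  field_simp

lemma gaussSmooth_eq_integral {s : ℝ} (hs : 0 < s) (p : EuclideanSpace ℝ (Fin d) → ℝ)
    (x : EuclideanSpace ℝ (Fin d)) :
    gaussSmooth d s p x = ∫ w, gaussKernel d 1 0 w * p (x + s • w) := by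
  have hscale := Measure.integral_comp_smul_of_nonneg volume
    (fun v => gaussKernel d s x (x + v) * p (x + v)) s (hR := hs.le)
  rw [finrank_euclideanSpace_fin,
    integral_add_left_eq_self (fun y => gaussKernel d s x y * p y) x] at hscale
  simp_rw [gaussKernel_add_smul hs, smul_eq_mul] at hscale
  rw [gaussSmooth, ← mul_inv_cancel_left₀ (pow_ne_zero d hs.ne') (∫ y, _), ← hscale,
    ← integral_const_mul]
  congr 1 with w
  field_simp

lemma integrable_gaussKernel_one_zero_mul {g : EuclideanSpace ℝ (Fin d) → ℝ} (hg : Continuous g)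
    {C : ℝ} {n : ℕ} (hC : ∀ w, |g w| ≤ C * ‖w‖ ^ n) :
    Integrable fun w => gaussKernel d 1 0 w * g w := by
  refine ((integrable_gaussKernel_one_zero_mul_norm_pow n).const_mul C).mono'
    (continuous_gaussKernel_one_zero.mul hg).aestronglyMeasurable (ae_of_all _ fun w => ?_)
  rw [Real.norm_eq_abs, abs_mul, abs_of_nonneg (gaussKernel_one_zero_nonneg w), mul_left_comm]
  exact mul_le_mul_of_nonneg_left (hC w) (gaussKernel_one_zero_nonneg w)

end Gaussian

section Expansion

variable {d : ℕ}

lemma abs_gaussSmooth_sub_taylor_le {p : EuclideanSpace ℝ (Fin d) → ℝ} (hp : ContDiff ℝ 4 p)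
    {B₀ B₄ : ℝ} (hB₀ : ∀ y, |p y| ≤ B₀) (hB₄ : ∀ u y, |(dirDeriv u)^[4] p y| ≤ B₄ * ‖u‖ ^ 4)
    (x : EuclideanSpace ℝ (Fin d)) {s : ℝ} (hs : 0 < s) :
    |gaussSmooth d s p x - p x
        - (∫ w, gaussKernel d 1 0 w * (dirDeriv w)^[2] p x) / 2 * s ^ 2|
      ≤ B₄ * (∫ w, gaussKernel d 1 0 w * ‖w‖ ^ 4) * s ^ 4 := by
  set φ := gaussKernel d 1 0
  set Q := fun w : EuclideanSpace ℝ (Fin d) => (dirDeriv w)^[2] p x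
  have hp2 : ContDiff ℝ 2 p := hp.of_le (by norm_num)
  obtain ⟨B₂, hB₂⟩ := Finite.exists_le fun c : Fin 2 → Fin d => |lderiv (List.ofFn c) p x|
  have hint_shift (v : ℝ) : Integrable fun w => φ w * p (x + v • w) :=
    integrable_gaussKernel_one_zero_mul (n := 0) (by fun_prop) (by simpa using fun w => hB₀ _)
  have hint_Q : Integrable fun w => φ w * Q w :=
    integrable_gaussKernel_one_zero_mul (continuous_iterate_dirDeriv_apply hp2 x)
      (abs_iterate_dirDeriv_le hp2 hB₂)
  have hsym : ∫ w, φ w * p (x - s • w) = ∫ w, φ w * p (x + s • w) := by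
    simpa [φ, gaussKernel_one_zero_neg, sub_eq_add_neg] using
      integral_neg_eq_self (fun w => φ w * p (x + s • w)) volume
  have hQ_smul (w : EuclideanSpace ℝ (Fin d)) : Q (s • w) = s ^ 2 * Q w := by
    simp only [Q, iterate_dirDeriv_smul, Pi.smul_apply, smul_eq_mul]
  have hsplit : gaussSmooth d s p x - p x - (∫ w, φ w * Q w) / 2 * s ^ 2
      = ∫ w, φ w * ((p (x + s • w) + p (x - s • w)) / 2 - p x - Q (s • w) / 2) := by
    have hexpand : (fun w => φ w * ((p (x + s • w) + p (x - s • w)) / 2 - p x - Q (s • w) / 2))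
        = fun w => (φ w * p (x + s • w) + φ w * p (x - s • w)) / 2 - φ w * p x
          - s ^ 2 / 2 * (φ w * Q w) := by
      funext w
      rw [hQ_smul]
      ring
    have hint_const : Integrable fun w => φ w * p x :=
      integrable_gaussKernel_one_zero_mul (n := 0) (C := |p x|) continuous_const (by simp)
    have hint_minus : Integrable fun w => φ w * p (x - s • w) := by
      simpa [sub_eq_add_neg] using hint_shift (-s)
    rw [hexpand, integral_sub, integral_sub, integral_div, integral_add (hint_shift s) hint_minus,
      hsym, integral_mul_const, integral_const_mul, integral_gaussKernel_one_zero,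
      gaussSmooth_eq_integral hs]
    · ring
    · exact ((hint_shift s).add hint_minus).div_const 2
    · exact hint_const
    · exact (((hint_shift s).add hint_minus).div_const 2).sub hint_const
    · exact hint_Q.const_mul _
  have hremainder (w : EuclideanSpace ℝ (Fin d)) :
      ‖φ w * ((p (x + s • w) + p (x - s • w)) / 2 - p x - Q (s • w) / 2)‖
        ≤ B₄ * s ^ 4 * (φ w * ‖w‖ ^ 4) := by
    have htaylor := abs_even_part_sub_taylor_le_of_dirDeriv hp x (s • w) (hB₄ (s • w))
    rw [norm_smul, Real.norm_eq_abs, abs_of_pos hs] at htaylor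
    rw [Real.norm_eq_abs, abs_mul, abs_of_nonneg (gaussKernel_one_zero_nonneg w)]
    calc _ ≤ φ w * (B₄ * (s * ‖w‖) ^ 4) :=
          mul_le_mul_of_nonneg_left htaylor (gaussKernel_one_zero_nonneg w)
      _ = _ := by ring
  rw [hsplit]
  calc _ ≤ ∫ w, B₄ * s ^ 4 * (φ w * ‖w‖ ^ 4) :=
        norm_integral_le_of_norm_le ((integrable_gaussKernel_one_zero_mul_norm_pow 4).const_mul _)
          (ae_of_all _ hremainder)
    _ = _ := by rw [integral_const_mul]; ring

end Expansion

lemma abs_richardson_sub_le {F : ℝ → ℝ} {L I K : ℝ}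
    (hF : ∀ s, 0 < s → |F s - L - I * s ^ 2| ≤ K * s ^ 4) {a₁ a₂ c₁ c₂ : ℝ}
    (ha₁ : 0 < a₁) (ha₂ : 0 < a₂) (hsum : c₁ + c₂ = 1) (hmoment : c₁ * a₁ ^ 2 + c₂ * a₂ ^ 2 = 0)
    {h : ℝ} (hh : 0 < h) :
    |c₁ * F (a₁ * h) + c₂ * F (a₂ * h) - L| ≤ (|c₁| * a₁ ^ 4 + |c₂| * a₂ ^ 4) * K * h ^ 4 := by
  have hcancel : c₁ * F (a₁ * h) + c₂ * F (a₂ * h) - L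
      = c₁ * (F (a₁ * h) - L - I * (a₁ * h) ^ 2) + c₂ * (F (a₂ * h) - L - I * (a₂ * h) ^ 2) := by
    linear_combination L * hsum + I * h ^ 2 * hmoment
  rw [hcancel]
  calc _ ≤ |c₁| * (K * (a₁ * h) ^ 4) + |c₂| * (K * (a₂ * h) ^ 4) := by
        refine (abs_add_le _ _).trans ?_
        rw [abs_mul, abs_mul]
        gcongr
        exacts [hF _ (by positivity), hF _ (by positivity)]
    _ = _ := by ring

theorem richardson_bias_order_four_general {d : ℕ}
    (p : EuclideanSpace ℝ (Fin d) → ℝ)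
    (hsmooth : ContDiff ℝ 4 p)
    (hbdd : ∀ l : List (Fin d), l.length ≤ 4 → ∃ B, ∀ y, |lderiv l p y| ≤ B)
    (a₁ a₂ : ℝ) (ha₁ : 0 < a₁) (ha₂ : 0 < a₂) (hne : a₁ ≠ a₂)
    (c₁ c₂ : ℝ) (hc₁ : c₁ = a₂ ^ 2 / (a₂ ^ 2 - a₁ ^ 2)) (hc₂ : c₂ = -a₁ ^ 2 / (a₂ ^ 2 - a₁ ^ 2))
    (x : EuclideanSpace ℝ (Fin d)) :
    ∃ C : ℝ, ∀ h : ℝ, 0 < h →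
      |c₁ * gaussSmooth d (a₁ * h) p x + c₂ * gaussSmooth d (a₂ * h) p x - p x|
        ≤ C * h ^ 4 := by
  obtain ⟨B₀, hB₀⟩ := hbdd [] (by simp)
  obtain ⟨B₄, hB₄⟩ := exists_abs_lderiv_ofFn_le hbdd le_rfl
  have hden : a₂ ^ 2 - a₁ ^ 2 ≠ 0 := by
    rw [sub_ne_zero, Ne, pow_left_inj₀ ha₂.le ha₁.le two_ne_zero]
    exact hne.symm
  have hsum : c₁ + c₂ = 1 := by
    rw [hc₁, hc₂]
    field_simp
    ring
  have hmoment : c₁ * a₁ ^ 2 + c₂ * a₂ ^ 2 = 0 := by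
    rw [hc₁, hc₂]
    field_simp
    ring
  exact ⟨_, fun h hh => abs_richardson_sub_le (fun s hs => abs_gaussSmooth_sub_taylor_le hsmooth
    hB₀ (fun u y => abs_iterate_dirDeriv_le hsmooth (fun c => hB₄ c y) u) x hs)
    ha₁ ha₂ hsum hmoment hh⟩

/-- the bias of the two-bandwidth Richardson-extrapolated kernel density
estimator, with bandwidths `h₁ = a₁ h`, `h₂ = a₂ h` and weights
`c₁ = h₂²/(h₂² − h₁²)`, `c₂ = −h₁²/(h₂² − h₁²)`, is `O(h⁴)`:
`|c₁ (φ_{h₁} * p)(x) + c₂ (φ_{h₂} * p)(x) − p(x)| ≤ C h⁴`. -/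
theorem richardson_bias_order_four {d : ℕ} (hd : 1 ≤ d)
    (p : EuclideanSpace ℝ (Fin d) → ℝ)
    (hp0 : ∀ y, 0 ≤ p y) (hp1 : ∫ y, p y = 1)
    (hsmooth : ContDiff ℝ 4 p)
    (hbdd : ∀ l : List (Fin d), l.length ≤ 4 → ∃ B, ∀ y, |lderiv l p y| ≤ B)
    (a₁ a₂ : ℝ) (ha₁ : 0 < a₁) (ha₂ : 0 < a₂) (hne : a₁ ≠ a₂)
    (c₁ c₂ : ℝ) (hc₁ : c₁ = a₂ ^ 2 / (a₂ ^ 2 - a₁ ^ 2)) (hc₂ : c₂ = -a₁ ^ 2 / (a₂ ^ 2 - a₁ ^ 2))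
    (x : EuclideanSpace ℝ (Fin d)) :
    ∃ C : ℝ, ∀ h : ℝ, 0 < h →
      |c₁ * gaussSmooth d (a₁ * h) p x + c₂ * gaussSmooth d (a₂ * h) p x - p x|
        ≤ C * h ^ 4 :=
  richardson_bias_order_four_general p hsmooth hbdd a₁ a₂ ha₁ ha₂ hne c₁ c₂ hc₁ hc₂ x
end

section
/- Let d ≥ 1, let p : ℝ^d → ℝ be a bounded probability density function that is continuous at x ∈ ℝ^d, and fix a_1, a_2 > 0. Then lim_{h → 0⁺} h^d ∫_{ℝ^d} K_{a_1 h}(x,y) · K_{a_2 h}(x,y) p(y) dy = p(x) / (2π(a_1² + a_2²))^{d/2}. (This is the leading cross term in the variance of the two-bandwidth Richardson-extrapolated estimator.) -/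
/-!
A product of two centred Gaussians is again a centred Gaussian: the kernels of widths `σ₁`, `σ₂`
multiply to `1 / √(2π(σ₁² + σ₂²))^d` times the kernel of width `σ₁σ₂ / √(σ₁² + σ₂²)`.
For `σᵢ = aᵢ h` the prefactor exactly absorbs `h^d`, and what remains is the Gaussian kernel of
width `c h` with `c = a₁a₂ / √(a₁² + a₂²)`. These kernels are an approximate identity as
`h → 0⁺`, so their integral against `p` tends to `p x`.
-/

open MeasureTheory Real Filter Topology

theorem integral_exp_neg_sq_norm_div {V : Type*} [NormedAddCommGroup V] [InnerProductSpace ℝ V]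
    [FiniteDimensional ℝ V] [MeasurableSpace V] [BorelSpace V] {σ : ℝ} (hσ : 0 < σ) :
    ∫ z : V, exp (-‖z‖ ^ 2 / (2 * σ ^ 2)) = (√(2 * π) * σ) ^ Module.finrank ℝ V := by
  have h := GaussianFourier.integral_rexp_neg_mul_sq_norm (V := V) (b := 1 / (2 * σ ^ 2))
    (by positivity)
  have hb : π / (1 / (2 * σ ^ 2)) = (√(2 * π) * σ) ^ 2 := by
    rw [mul_pow, sq_sqrt (by positivity)]; field_simp
  rw [hb, ← rpow_natCast (√(2 * π) * σ) 2, ← rpow_mul (by positivity), Nat.cast_ofNat,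
    mul_div_cancel₀ _ two_ne_zero, rpow_natCast] at h
  rw [← h]
  congr 1 with z
  ring_nf

section GaussKernel

variable {d : ℕ}

theorem gaussKernel_nonneg {σ : ℝ} (hσ : 0 ≤ σ) (x y : EuclideanSpace ℝ (Fin d)) :
    0 ≤ gaussKernel d σ x y := by
  unfold gaussKernel; positivity

theorem gaussKernel_eq_inv_pow_mul {σ : ℝ} (hσ : 0 < σ) (x y : EuclideanSpace ℝ (Fin d)) :
    gaussKernel d σ x y = σ⁻¹ ^ d * gaussKernel d 1 0 (σ⁻¹ • (x - y)) := by
  simp only [gaussKernel, zero_sub, norm_neg, norm_smul, norm_inv, norm_of_nonneg hσ.le]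
  field_simp
  rw [one_pow, ← mul_pow, mul_one_div_cancel hσ.ne', one_pow]

theorem integral_gaussKernel {σ : ℝ} (hσ : 0 < σ) (x : EuclideanSpace ℝ (Fin d)) :
    ∫ y, gaussKernel d σ x y = 1 := by
  unfold gaussKernel
  rw [integral_div, integral_sub_left_eq_self (fun z => exp (-‖z‖ ^ 2 / (2 * σ ^ 2))),
    integral_exp_neg_sq_norm_div hσ, finrank_euclideanSpace_fin, mul_pow,
    div_self (by positivity)]

theorem tendsto_norm_pow_mul_gaussKernel_cobounded :
    Tendsto (fun z : EuclideanSpace ℝ (Fin d) => ‖z‖ ^ d * gaussKernel d 1 0 z)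
      (Bornology.cobounded _) (𝓝 0) := by
  have h := (tendsto_rpow_abs_mul_exp_neg_mul_sq_cocompact one_half_pos d).comp
    ((tendsto_norm_cobounded_atTop (E := EuclideanSpace ℝ (Fin d))).mono_right atTop_le_cocompact)
  convert h.div_const (√(2 * π) ^ d) using 2 with z
  · simp only [gaussKernel, Function.comp_apply, zero_sub, norm_neg, abs_norm, rpow_natCast,
      one_pow, mul_one, mul_div_assoc]
    ring_nf
  · simp

theorem tendsto_integral_gaussKernel_mul {p : EuclideanSpace ℝ (Fin d) → ℝ}
    (hp : Integrable p) {x : EuclideanSpace ℝ (Fin d)} (hpx : ContinuousAt p x) :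
    Tendsto (fun σ => ∫ y, gaussKernel d σ x y * p y) (𝓝[>] 0) (𝓝 (p x)) := by
  have h := tendsto_integral_comp_smul_smul_of_integrable' (gaussKernel_nonneg zero_le_one 0)
    (integral_gaussKernel one_pos 0)
    (by simpa using tendsto_norm_pow_mul_gaussKernel_cobounded (d := d)) hp hpx
  refine (h.comp tendsto_inv_nhdsGT_zero).congr' ?_
  filter_upwards [self_mem_nhdsWithin] with σ (hσ : 0 < σ)
  simp [gaussKernel_eq_inv_pow_mul hσ]

theorem gaussKernel_mul_gaussKernel {σ₁ σ₂ : ℝ} (h₁ : 0 < σ₁) (h₂ : 0 < σ₂)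
    (x y : EuclideanSpace ℝ (Fin d)) :
    gaussKernel d σ₁ x y * gaussKernel d σ₂ x y =
      gaussKernel d (σ₁ * σ₂ / √(σ₁ ^ 2 + σ₂ ^ 2)) x y / √(2 * π * (σ₁ ^ 2 + σ₂ ^ 2)) ^ d := by
  have hs : 0 < √(σ₁ ^ 2 + σ₂ ^ 2) := sqrt_pos.2 (by positivity)
  have hs2 : √(σ₁ ^ 2 + σ₂ ^ 2) ^ 2 = σ₁ ^ 2 + σ₂ ^ 2 := sq_sqrt (by positivity)
  unfold gaussKernel
  rw [div_mul_div_comm, ← exp_add, sqrt_mul (by positivity : (0 : ℝ) ≤ 2 * π)]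
  generalize √(σ₁ ^ 2 + σ₂ ^ 2) = s at hs hs2 ⊢
  have hexp : -‖x - y‖ ^ 2 / (2 * σ₁ ^ 2) + -‖x - y‖ ^ 2 / (2 * σ₂ ^ 2) =
      -‖x - y‖ ^ 2 / (2 * (σ₁ * σ₂ / s) ^ 2) := by
    rw [div_pow, hs2]
    field_simp
    ring
  rw [hexp, div_pow (σ₁ * σ₂) s d]
  field_simp
  ring

theorem pow_mul_gaussKernel_mul_gaussKernel {a₁ a₂ h : ℝ} (ha₁ : 0 < a₁) (ha₂ : 0 < a₂)
    (hh : 0 < h) (x y : EuclideanSpace ℝ (Fin d)) :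
    h ^ d * (gaussKernel d (a₁ * h) x y * gaussKernel d (a₂ * h) x y) =
      gaussKernel d (a₁ * a₂ / √(a₁ ^ 2 + a₂ ^ 2) * h) x y / √(2 * π * (a₁ ^ 2 + a₂ ^ 2)) ^ d := by
  have hsum : (a₁ * h) ^ 2 + (a₂ * h) ^ 2 = (a₁ ^ 2 + a₂ ^ 2) * h ^ 2 := by ring
  have hσ : a₁ * h * (a₂ * h) / (√(a₁ ^ 2 + a₂ ^ 2) * h) = a₁ * a₂ / √(a₁ ^ 2 + a₂ ^ 2) * h := by
    field_simp
  rw [gaussKernel_mul_gaussKernel (mul_pos ha₁ hh) (mul_pos ha₂ hh), hsum, ← mul_assoc (2 * π),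
    sqrt_mul' _ (sq_nonneg h), sqrt_mul' _ (sq_nonneg h), sqrt_sq hh.le, hσ]
  field_simp
  ring

end GaussKernel

theorem cross_term_limit_general {d : ℕ}
    (p : EuclideanSpace ℝ (Fin d) → ℝ) (hp1 : ∫ y, p y = 1)
    (x : EuclideanSpace ℝ (Fin d)) (hcont : ContinuousAt p x)
    (a₁ a₂ : ℝ) (ha₁ : 0 < a₁) (ha₂ : 0 < a₂) :
    Tendsto
      (fun h : ℝ => h ^ d * ∫ y, gaussKernel d (a₁ * h) x y * gaussKernel d (a₂ * h) x y * p y)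
      (𝓝[>] 0)
      (𝓝 (p x / Real.sqrt (2 * Real.pi * (a₁ ^ 2 + a₂ ^ 2)) ^ d)) := by
  have hscale : Tendsto (a₁ * a₂ / √(a₁ ^ 2 + a₂ ^ 2) * ·) (𝓝[>] 0) (𝓝[>] 0) :=
    tendsto_iff_comap.2 (comap_mulLeft_nhdsGT_zero (by positivity)).ge
  -- `∫ p = 1` gives integrability, since a non-integrable function has Bochner integral `0`.
  refine (((tendsto_integral_gaussKernel_mul (integrable_of_integral_eq_one hp1) hcont).comp
    hscale).div_const _).congr' ?_
  filter_upwards [self_mem_nhdsWithin] with h (hh : 0 < h)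
  rw [Function.comp_apply, ← integral_div, ← integral_const_mul]
  congr 1 with y
  rw [← mul_assoc, pow_mul_gaussKernel_mul_gaussKernel ha₁ ha₂ hh, div_mul_eq_mul_div _ _ (p y)]

/-- the leading cross term in the variance of the two-bandwidth
Richardson-extrapolated estimator:
`lim_{h→0⁺} h^d ∫ K_{a₁h}(x,y) K_{a₂h}(x,y) p(y) dy = p(x) / (2π(a₁²+a₂²))^{d/2}`. -/
theorem cross_term_limit {d : ℕ} (hd : 1 ≤ d)
    (p : EuclideanSpace ℝ (Fin d) → ℝ) (M : ℝ)
    (hp0 : ∀ y, 0 ≤ p y) (hpm : Measurable p) (hp1 : ∫ y, p y = 1)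
    (hpM : ∀ y, p y ≤ M)
    (x : EuclideanSpace ℝ (Fin d)) (hcont : ContinuousAt p x)
    (a₁ a₂ : ℝ) (ha₁ : 0 < a₁) (ha₂ : 0 < a₂) :
    Tendsto
      (fun h : ℝ => h ^ d * ∫ y, gaussKernel d (a₁ * h) x y * gaussKernel d (a₂ * h) x y * p y)
      (𝓝[>] 0)
      (𝓝 (p x / Real.sqrt (2 * Real.pi * (a₁ ^ 2 + a₂ ^ 2)) ^ d)) :=
  cross_term_limit_general p hp1 x hcont a₁ a₂ ha₁ ha₂
end

section
/- For every natural number r ≥ 1 and every x ∈ ℝ, the (2r)-th derivative of g(x) = exp(−x²/2) satisfies |g^{(2r)}(x)| ≤ (2r−1)!!, where (2r−1)!! = (2r)!/(2^r r!); that is, the maximum of the absolute value of the (2r)-th derivative of the Gaussian is attained at 0 and equals (2r−1)!!. -/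
/-!
The Gaussian `exp (-x²/2)` is the Fourier transform of the positive function
`√(2π) exp (-2π²ξ²)`. Differentiating `2r` times under the integral turns it into the Fourier
transform of `(-1)^r (2πξ)^(2r) √(2π) exp (-2π²ξ²)`, a constant sign times a nonnegative function,
and the Fourier transform of a nonnegative function has its largest modulus at `0`. The value at
`0` is the constant coefficient of the Hermite polynomial `He_{2r}`, namely `(-1)^r (2r-1)!!`.
-/

open Real FourierTransform MeasureTheory
open scoped Nat

/-- At `r = 0` the truncated subtraction makes the right side `(2 * 0 - 1)‼ = 0‼ = 1`. -/
theorem Nat.factorial_two_mul_eq_mul_doubleFactorial (r : ℕ) :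
    (2 * r)! = 2 ^ r * r ! * (2 * r - 1)‼ := by
  cases r with
  | zero => rfl
  | succ k =>
    rw [show 2 * (k + 1) - 1 = 2 * k + 1 by omega, show 2 * (k + 1) = 2 * k + 1 + 1 by ring,
      Nat.factorial_eq_mul_doubleFactorial, show 2 * k + 1 + 1 = 2 * (k + 1) by ring,
      Nat.doubleFactorial_two_mul]

theorem iteratedDeriv_ofReal_comp {f : ℝ → ℝ} {n : ℕ} {x : ℝ} (hf : ContDiffAt ℝ n f x) :
    iteratedDeriv n (fun y => (f y : ℂ)) x = iteratedDeriv n f x := by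
  simp only [iteratedDeriv_eq_iteratedFDeriv]
  rw [show (fun y => (f y : ℂ)) = Complex.ofRealCLM ∘ f from rfl,
    Complex.ofRealCLM.iteratedFDeriv_comp_left hf le_rfl]
  rfl

theorem integrable_pow_mul_exp_neg_mul_sq {b : ℝ} (hb : 0 < b) (n : ℕ) :
    Integrable fun x : ℝ => x ^ n * exp (-b * x ^ 2) := by
  simpa [Real.rpow_natCast] using
    integrable_rpow_mul_exp_neg_mul_sq hb (s := n) (by linarith [n.cast_nonneg (α := ℝ)])

theorem norm_fourier_ofReal_le_norm_fourier_zero {f : ℝ → ℝ} (hf : 0 ≤ f) (ξ : ℝ) :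
    ‖𝓕 (fun x => (f x : ℂ)) ξ‖ ≤ ‖𝓕 (fun x => (f x : ℂ)) 0‖ := by
  have hzero : 𝓕 (fun x => (f x : ℂ)) 0 = ((∫ x, f x : ℝ) : ℂ) := by
    simpa [Real.fourier_real_eq] using integral_complex_ofReal
  calc ‖𝓕 (fun x => (f x : ℂ)) ξ‖ ≤ ∫ x, ‖(f x : ℂ)‖ :=
        VectorFourier.norm_fourierIntegral_le_integral_norm _ _ _ _ _
    _ = ‖𝓕 (fun x => (f x : ℂ)) 0‖ := by
      simp [hzero, abs_of_nonneg (hf _), abs_of_nonneg (integral_nonneg hf)]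

theorem norm_iteratedDeriv_two_mul_fourier_ofReal_le {f : ℝ → ℝ} (hf : 0 ≤ f) {r : ℕ}
    (hint : ∀ n ≤ 2 * r, Integrable fun x => x ^ n * f x) (ξ : ℝ) :
    ‖iteratedDeriv (2 * r) (𝓕 fun x => (f x : ℂ)) ξ‖ ≤
      ‖iteratedDeriv (2 * r) (𝓕 fun x => (f x : ℂ)) 0‖ := by
  set g : ℝ → ℝ := fun x => (2 * π * x) ^ (2 * r) * f x
  have hg : 0 ≤ g := fun x => mul_nonneg (by rw [pow_mul]; positivity) (hf x)
  have hmul : (fun x : ℝ => (-2 * π * Complex.I * x) ^ (2 * r) • (f x : ℂ)) =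
      (-1 : ℂ) ^ r • fun x => (g x : ℂ) := by
    ext x
    have hsq : (-2 * π * Complex.I * x) ^ 2 = -1 * (2 * π * x : ℂ) ^ 2 := by
      linear_combination (4 * (π : ℂ) ^ 2 * x ^ 2) * Complex.I_sq
    simp only [g, Pi.smul_apply, smul_eq_mul, pow_mul, hsq, mul_pow]
    push_cast
    ring
  have hderiv : iteratedDeriv (2 * r) (𝓕 fun x => (f x : ℂ)) =
      (-1 : ℂ) ^ r • 𝓕 fun x => (g x : ℂ) := by
    rw [Real.iteratedDeriv_fourier (N := (2 * r : ℕ)) (fun n hn => ?_) le_rfl, hmul]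
    · exact VectorFourier.fourierIntegral_const_smul _ _ _ _ _
    · simpa [Complex.real_smul] using (hint n (by exact_mod_cast hn)).ofReal (𝕜 := ℂ)
  simpa [hderiv, norm_smul] using norm_fourier_ofReal_le_norm_fourier_zero hg ξ

theorem fourier_gaussian_two_pi_sq :
    𝓕 (fun x : ℝ => ((√(2 * π) * exp (-(2 * π ^ 2) * x ^ 2) : ℝ) : ℂ)) =
      fun ξ => ((exp (-ξ ^ 2 / 2) : ℝ) : ℂ) := by
  have hb : 0 < ((2 * π : ℝ) : ℂ).re := by simp [pi_pos]
  have hsmul : (fun x : ℝ => ((√(2 * π) * exp (-(2 * π ^ 2) * x ^ 2) : ℝ) : ℂ)) =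
      (√(2 * π) : ℂ) • fun x : ℝ => Complex.exp (-π * ((2 * π : ℝ) : ℂ) * x ^ 2) := by
    ext x
    rw [Pi.smul_apply, smul_eq_mul]
    push_cast
    ring_nf
  have hsqrt : ((2 * π : ℝ) : ℂ) ^ (1 / 2 : ℂ) = (√(2 * π) : ℂ) := by
    rw [show (1 / 2 : ℂ) = ((1 / 2 : ℝ) : ℂ) by norm_num,
      ← Complex.ofReal_cpow (by positivity), Real.sqrt_eq_rpow]
  have hsqrt_ne : (√(2 * π) : ℂ) ≠ 0 := by exact_mod_cast (Real.sqrt_pos.2 (by positivity)).ne'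
  rw [hsmul, show ∀ (c : ℂ) (h : ℝ → ℂ), 𝓕 (c • h) = c • 𝓕 h from
    fun c h => VectorFourier.fourierIntegral_const_smul _ _ _ _ _, fourier_gaussian_pi hb]
  ext ξ
  rw [Pi.smul_apply, hsqrt, smul_eq_mul, ← mul_assoc, mul_one_div_cancel hsqrt_ne, one_mul]
  push_cast
  congr 1
  field_simp

theorem iteratedDeriv_two_mul_gaussian_zero (r : ℕ) :
    iteratedDeriv (2 * r) (fun x : ℝ => exp (-x ^ 2 / 2)) 0 = (-1) ^ r * (2 * r - 1)‼ := by
  have hcoeff := Polynomial.coeff_hermite_explicit r 0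
  simp only [add_zero, Nat.choose_zero_right, Nat.cast_one, mul_one] at hcoeff
  simp_rw [neg_div, iteratedDeriv_eq_iterate, Polynomial.deriv_gaussian_eq_hermite_mul_gaussian,
    ← Polynomial.coeff_zero_eq_aeval_zero', hcoeff]
  simp [pow_mul]

theorem gaussian_iteratedDeriv_bound_general (r : ℕ) (x : ℝ) :
    |iteratedDeriv (2 * r) (fun x : ℝ => Real.exp (-x ^ 2 / 2)) x| ≤
      ((2 * r).factorial / (2 ^ r * r.factorial) : ℝ) := by
  have hsmooth : ∀ y, ContDiffAt ℝ (2 * r : ℕ) (fun x : ℝ => exp (-x ^ 2 / 2)) y :=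
    fun y => by fun_prop
  have hmax : |iteratedDeriv (2 * r) (fun x : ℝ => exp (-x ^ 2 / 2)) x| ≤
      |iteratedDeriv (2 * r) (fun x : ℝ => exp (-x ^ 2 / 2)) 0| := by
    rw [← Real.norm_eq_abs, ← Real.norm_eq_abs, ← Complex.norm_real, ← Complex.norm_real,
      ← iteratedDeriv_ofReal_comp (hsmooth x), ← iteratedDeriv_ofReal_comp (hsmooth 0),
      ← fourier_gaussian_two_pi_sq]
    refine norm_iteratedDeriv_two_mul_fourier_ofReal_le (fun y => by positivity) (fun n _ => ?_) x
    simpa [mul_left_comm] using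
      (integrable_pow_mul_exp_neg_mul_sq (b := 2 * π ^ 2) (by positivity) n).const_mul √(2 * π)
  have hval : ((2 * r)! / (2 ^ r * r !) : ℝ) = (2 * r - 1)‼ := by
    rw [Nat.factorial_two_mul_eq_mul_doubleFactorial]
    push_cast
    field_simp
  rw [hval]
  simpa [iteratedDeriv_two_mul_gaussian_zero, abs_mul] using hmax

/-- the `(2r)`-th derivative of the Gaussian `g(x) = exp(−x²/2)` is
bounded in absolute value by `(2r−1)!! = (2r)!/(2^r r!)`, the value at `0`. -/
theorem gaussian_iteratedDeriv_bound (r : ℕ) (hr : 1 ≤ r) (x : ℝ) :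
    |iteratedDeriv (2 * r) (fun x : ℝ => Real.exp (-x ^ 2 / 2)) x| ≤
      ((2 * r).factorial / (2 ^ r * r.factorial) : ℝ) :=
  gaussian_iteratedDeriv_bound_general r x
end
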